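/- The forward Cauchy completion (M_C^+, d_Q) of a generalized metric space is forward complete: every sequence {z_n} ⊂ M_C^+ which is forward Cauchy for the quasi-distance d_Q converges in M_C^+ with the topology generated by backward balls (i.e., there exists z ∈ M_C^+ with d_Q(z_n, z) → 0). -/

import Mathlib

open Filter Topology

/-- A generalized metric space: `d` is nonnegative, separates points symmetrically,
satisfies the triangle inequality, and convergence `d (xₙ, x) → 0` is equivalent
to `d (x, xₙ) → 0` (axiom (a4)). -/
structure GenMetric (M : Type*) where
  d : M → M → ℝ
  d_nonneg : ∀ x y, 0 ≤ d x y
  d_eq_zero_iff : ∀ x y, (d x y = 0 ∧ d y x = 0) ↔ x = y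
  d_triangle : ∀ x y z, d x z ≤ d x y + d y z
  symm_conv : ∀ (x : M) (u : ℕ → M),
    Tendsto (fun n => d (u n) x) atTop (𝓝 0) ↔ Tendsto (fun n => d x (u n)) atTop (𝓝 0)

/-- A forward Cauchy sequence for a (possibly non-symmetric) distance. -/
def ForwardCauchy {M : Type*} (d : M → M → ℝ) (u : ℕ → M) : Prop :=
  ∀ ε > (0 : ℝ), ∃ n₀ : ℕ, ∀ n m : ℕ, n₀ ≤ n → n ≤ m → d (u n) (u m) < ε


/-- The double limit `lim_n (lim_m d (x n) (y m)) = 0`, expressed by the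
ε-characterization of iterated limits (valid since `d ≥ 0`). -/
def DoubleLimZero {M : Type*} (d : M → M → ℝ) (x y : ℕ → M) : Prop :=
  ∀ ε > (0 : ℝ), ∃ n₀ : ℕ, ∀ n ≥ n₀, ∃ m₀ : ℕ, ∀ m ≥ m₀, d (x n) (y m) < ε

/-- Two sequences are equivalent when both double limits vanish. -/
def CauEquiv {M : Type*} (d : M → M → ℝ) (x y : ℕ → M) : Prop :=
  DoubleLimZero d x y ∧ DoubleLimZero d y x

open scoped ENNReal

/-- `ℓ ∈ [0,∞]` is the double limit `lim_n (lim_m d (x n) (y m))`: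
for each `n` the inner limit exists in `[0,∞]` and the resulting sequence
of inner limits converges to `ℓ` in `[0,∞]`. -/
def IsDoubleLim {M : Type*} (d : M → M → ℝ) (x y : ℕ → M) (ℓ : ℝ≥0∞) : Prop :=
  ∃ L : ℕ → ℝ≥0∞,
    (∀ n, Tendsto (fun m => ENNReal.ofReal (d (x n) (y m))) atTop (𝓝 (L n))) ∧
    Tendsto L atTop (𝓝 ℓ)

/-!
Pick forward Cauchy representatives `uₙ` of the points `zₙ`. Past an index `Nₙ` from which `uₙ`
is `1/n`-Cauchy, the inner limits `lim_k d(uₙ i, uₗ k)` are at most `1/n + d_Q(zₙ, zₗ)`. Choose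
indices `mₗ` inductively so that `uₗ (mₗ)` realises this bound up to `1/l` against the finitely
many points `uₙ i` with `n < l`, `Nₙ ≤ i ≤ mₗ₋₁`. Then the diagonal sequence `yₗ = uₗ (mₗ)`
satisfies `d(uₙ i, yₗ) ≤ 2/n + sup_{l ≥ n} d_Q(zₙ, zₗ)`, which tends to `0`: this makes `y`
forward Cauchy and bounds `d_Q(zₙ, [y])`.
-/

section ForwardCauchy

variable {M : Type*} {d : M → M → ℝ} {u : ℕ → M}

theorem ForwardCauchy.exists_ofReal_lt (hu : ForwardCauchy d u) {ε : ℝ≥0∞} (hε : ε ≠ 0) :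
    ∃ N, ∀ i j, N ≤ i → i ≤ j → ENNReal.ofReal (d (u i) (u j)) < ε := by
  rcases eq_or_ne ε ⊤ with rfl | hε_top
  · exact ⟨0, fun _ _ _ _ => ENNReal.ofReal_lt_top⟩
  have hpos : 0 < ε.toReal := ENNReal.toReal_pos hε hε_top
  obtain ⟨N, hN⟩ := hu ε.toReal hpos
  refine ⟨N, fun i j hi hij => ?_⟩
  rw [← ENNReal.ofReal_toReal hε_top]
  exact ENNReal.ofReal_lt_ofReal_iff'.2 ⟨hN i j hi hij, hpos⟩

theorem forwardCauchy_of_ofReal_le {e : ℕ → ℝ≥0∞} (he : Tendsto e atTop (𝓝 0))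
    (hu : ∀ n m, n ≤ m → ENNReal.ofReal (d (u n) (u m)) ≤ e n) : ForwardCauchy d u := by
  intro ε hε
  obtain ⟨n₀, hn₀⟩ := eventually_atTop.1 (he.eventually_lt_const (ENNReal.ofReal_pos.2 hε))
  exact ⟨n₀, fun n m hn hnm =>
    (ENNReal.ofReal_lt_ofReal_iff hε).1 ((hu n m hnm).trans_lt (hn₀ n hn))⟩

theorem IsDoubleLim.le_of_eventually_le {v : ℕ → M} {ℓ c : ℝ≥0∞} (h : IsDoubleLim d u v ℓ)
    (hc : ∀ᶠ i in atTop, ∀ᶠ k in atTop, ENNReal.ofReal (d (u i) (v k)) ≤ c) : ℓ ≤ c := by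
  obtain ⟨L, hL, hℓ⟩ := h
  exact le_of_tendsto hℓ (hc.mono fun i hi => le_of_tendsto (hL i) hi)

end ForwardCauchy

theorem exists_tendsto_zero_forall_le {D : ℕ → ℕ → ℝ≥0∞}
    (hD : ∀ ε : ℝ≥0∞, 0 < ε → ∃ n₀ : ℕ, ∀ n m : ℕ, n₀ ≤ n → n ≤ m → D n m < ε) :
    ∃ e : ℕ → ℝ≥0∞, Tendsto e atTop (𝓝 0) ∧ ∀ n m, n ≤ m → D n m ≤ e n := by
  refine ⟨fun n => ⨆ (m) (_ : n ≤ m), D n m, ENNReal.tendsto_nhds_zero.2 fun ε hε => ?_,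
    fun n m hnm => le_iSup₂ (f := fun m (_ : n ≤ m) => D n m) m hnm⟩
  obtain ⟨n₀, hn₀⟩ := hD ε hε
  exact eventually_atTop.2 ⟨n₀, fun n hn => iSup₂_le fun m hnm => (hn₀ n m hn hnm).le⟩

/-- `P l b k`: `k` is an admissible `l`-th index once all earlier indices are at most `b`. -/
theorem exists_strictMono_forall_lt {Q : ℕ → ℕ → Prop} {P : ℕ → ℕ → ℕ → Prop}
    (hQ : ∀ l, ∀ᶠ k in atTop, Q l k) (hP : ∀ l b, ∀ᶠ k in atTop, P l b k)
    (hP_anti : ∀ l k, Antitone fun b => P l b k) :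
    ∃ m : ℕ → ℕ, StrictMono m ∧ (∀ l, Q l (m l)) ∧ ∀ j l, j < l → P l (m j) (m l) := by
  choose f hf using fun l b => ((eventually_gt_atTop b).and ((hQ l).and (hP l b))).exists
  let m : ℕ → ℕ := fun l => Nat.rec (f 0 0) (fun l prev => f (l + 1) prev) l
  have hm : StrictMono m := strictMono_nat_of_lt_succ fun l => (hf (l + 1) (m l)).1
  refine ⟨m, hm, fun l => ?_, fun j l hjl => ?_⟩
  · cases l with
    | zero => exact (hf 0 0).2.1
    | succ l => exact (hf (l + 1) (m l)).2.1
  · obtain ⟨l, rfl⟩ : ∃ l', l = l' + 1 := ⟨l - 1, by omega⟩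
    exact hP_anti _ _ (hm.monotone (Nat.le_of_lt_succ hjl)) (hf (l + 1) (m l)).2.2

namespace GenMetric

variable {M : Type*} (G : GenMetric M)

theorem d_self (x : M) : G.d x x = 0 :=
  ((G.d_eq_zero_iff x x).2 rfl).1

theorem ofReal_d_le_add (x y z : M) :
    ENNReal.ofReal (G.d x z) ≤ ENNReal.ofReal (G.d x y) + ENNReal.ofReal (G.d y z) :=
  (ENNReal.ofReal_le_ofReal (G.d_triangle x y z)).trans ENNReal.ofReal_add_le

theorem inner_limit_le {u v : ℕ → M} {L : ℕ → ℝ≥0∞} {ℓ δ : ℝ≥0∞}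
    (hL : ∀ i, Tendsto (fun k => ENNReal.ofReal (G.d (u i) (v k))) atTop (𝓝 (L i)))
    (hℓ : Tendsto L atTop (𝓝 ℓ)) {N : ℕ}
    (hN : ∀ i j, N ≤ i → i ≤ j → ENNReal.ofReal (G.d (u i) (u j)) ≤ δ) {i : ℕ} (hi : N ≤ i) :
    L i ≤ δ + ℓ := by
  have hstep : ∀ j, i ≤ j → L i ≤ δ + L j := fun j hij =>
    le_of_tendsto_of_tendsto' (hL i) ((hL j).const_add δ) fun k =>
      (G.ofReal_d_le_add _ (u j) _).trans (add_le_add_left (hN i j hi hij) _)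
  exact ge_of_tendsto (hℓ.const_add δ) ((eventually_ge_atTop i).mono hstep)

theorem eventually_ofReal_d_le_add {u v : ℕ → M} {ℓ δ η : ℝ≥0∞} (h : IsDoubleLim G.d u v ℓ)
    {N : ℕ} (hN : ∀ i j, N ≤ i → i ≤ j → ENNReal.ofReal (G.d (u i) (u j)) ≤ δ) (hη : η ≠ 0)
    {i : ℕ} (hi : N ≤ i) : ∀ᶠ k in atTop, ENNReal.ofReal (G.d (u i) (v k)) ≤ δ + ℓ + η := by
  obtain ⟨L, hL, hℓ⟩ := h
  rcases eq_or_ne (δ + ℓ) ⊤ with htop | htop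
  · simp [htop]
  exact (hL i).eventually_le_const
    ((G.inner_limit_le hL hℓ hN hi).trans_lt (ENNReal.lt_add_right htop hη))

theorem exists_diagonal {u : ℕ → ℕ → M} (hu : ∀ n, ForwardCauchy G.d (u n))
    {D : ℕ → ℕ → ℝ≥0∞} (hD : ∀ n l, IsDoubleLim G.d (u n) (u l) (D n l))
    {δ : ℕ → ℝ≥0∞} (hδ : ∀ n, δ n ≠ 0) :
    ∃ N m : ℕ → ℕ, StrictMono m ∧ N ≤ m ∧ ∀ j n l, j < l → n < l → ∀ i ∈ Set.Icc (N n) (m j),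
      ENNReal.ofReal (G.d (u n i) (u l (m l))) ≤ δ n + D n l + δ l := by
  choose N hN using fun n => (hu n).exists_ofReal_lt (hδ n)
  obtain ⟨m, hm, hNm, hdiag⟩ := exists_strictMono_forall_lt (Q := fun l k => N l ≤ k)
    (P := fun l b k => ∀ n ∈ Set.Iio l, ∀ i ∈ Set.Icc (N n) b,
      ENNReal.ofReal (G.d (u n i) (u l k)) ≤ δ n + D n l + δ l)
    (fun l => eventually_ge_atTop (N l))
    (fun l b => (Set.finite_Iio l).eventually_all.2 fun n _ =>
      (Set.finite_Icc (N n) b).eventually_all.2 fun i hi =>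
        G.eventually_ofReal_d_le_add (hD n l) (fun i j hi hij => (hN n i j hi hij).le)
          (hδ l) hi.1)
    (fun l k b b' hbb' h n hn i hi => h n hn i ⟨hi.1, hi.2.trans hbb'⟩)
  exact ⟨N, m, hm, hNm, fun j n l hjl hnl => hdiag j l hjl n hnl⟩

end GenMetric

theorem cauchy_completion_forward_complete_general {M X : Type*} (G : GenMetric M)
    (q : (ℕ → M) → X) (dQ : X → X → ℝ≥0∞)
    (hsurj : ∀ z : X, ∃ u : ℕ → M, ForwardCauchy G.d u ∧ q u = z)
    (hdQ : ∀ u v : ℕ → M, ForwardCauchy G.d u → ForwardCauchy G.d v →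
      IsDoubleLim G.d u v (dQ (q u) (q v))) :
    ∀ z : ℕ → X,
      (∀ ε : ℝ≥0∞, 0 < ε → ∃ n₀ : ℕ, ∀ n m : ℕ, n₀ ≤ n → n ≤ m → dQ (z n) (z m) < ε) →
      ∃ w : X, Tendsto (fun n => dQ (z n) w) atTop (𝓝 0) := by
  intro z hz
  choose u hu hqu using fun n => hsurj (z n)
  have hD : ∀ n l, IsDoubleLim G.d (u n) (u l) (dQ (z n) (z l)) := fun n l => by
    simpa only [hqu] using hdQ (u n) (u l) (hu n) (hu l)
  obtain ⟨e, he, hze⟩ := exists_tendsto_zero_forall_le hz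
  obtain ⟨N, m, hm, hNm, hdiag⟩ := G.exists_diagonal hu hD (δ := fun n => (n : ℝ≥0∞)⁻¹)
    fun n => ENNReal.inv_ne_zero.2 (ENNReal.natCast_ne_top n)
  let c : ℕ → ℝ≥0∞ := fun n => (n : ℝ≥0∞)⁻¹ + e n + (n : ℝ≥0∞)⁻¹
  have hc : Tendsto c atTop (𝓝 0) := by
    simpa using (ENNReal.tendsto_inv_nat_nhds_zero.add he).add ENNReal.tendsto_inv_nat_nhds_zero
  have hbound : ∀ j n l, j < l → n < l → ∀ i ∈ Set.Icc (N n) (m j),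
      ENNReal.ofReal (G.d (u n i) (u l (m l))) ≤ c n := fun j n l hjl hnl i hi =>
    (hdiag j n l hjl hnl i hi).trans (add_le_add (add_le_add_right (hze n l hnl.le) _)
      (ENNReal.inv_le_inv.2 (Nat.cast_le.2 hnl.le)))
  let y : ℕ → M := fun l => u l (m l)
  have hy : ForwardCauchy G.d y := forwardCauchy_of_ofReal_le hc fun n l hnl => by
    rcases hnl.eq_or_lt with rfl | hnl
    · simp [y, G.d_self]
    · exact hbound n n l hnl hnl (m n) ⟨hNm n, le_rfl⟩
  refine ⟨q y, tendsto_of_tendsto_of_tendsto_of_le_of_le tendsto_const_nhds hc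
    (fun _ => zero_le) fun n => ?_⟩
  refine (hqu n ▸ hdQ (u n) y (hu n) hy).le_of_eventually_le ?_
  filter_upwards [eventually_ge_atTop (N n)] with i hi
  filter_upwards [eventually_gt_atTop (max n i)] with l hl
  exact hbound i n l (max_lt_iff.1 hl).2 (max_lt_iff.1 hl).1 i ⟨hi, hm.id_le i⟩

/-- The forward Cauchy completion `(M_C^+, d_Q)` (presented abstractly as a type
`X` with the quotient map `q` from forward Cauchy sequences and the extended
quasi-distance `d_Q` given by double limits) is forward complete: every sequence
in `M_C^+` which is forward Cauchy for `d_Q` converges with respect to the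
topology generated by the backward balls, i.e. there is `w` with
`d_Q (zₙ, w) → 0`. -/
theorem cauchy_completion_forward_complete {M X : Type*} (G : GenMetric M)
    (q : (ℕ → M) → X) (dQ : X → X → ℝ≥0∞)
    (hsurj : ∀ z : X, ∃ u : ℕ → M, ForwardCauchy G.d u ∧ q u = z)
    (hq : ∀ u v : ℕ → M, ForwardCauchy G.d u → ForwardCauchy G.d v →
      (q u = q v ↔ CauEquiv G.d u v))
    (hdQ : ∀ u v : ℕ → M, ForwardCauchy G.d u → ForwardCauchy G.d v →
      IsDoubleLim G.d u v (dQ (q u) (q v))) :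
    ∀ z : ℕ → X,
      (∀ ε : ℝ≥0∞, 0 < ε → ∃ n₀ : ℕ, ∀ n m : ℕ, n₀ ≤ n → n ≤ m → dQ (z n) (z m) < ε) →
      ∃ w : X, Tendsto (fun n => dQ (z n) w) atTop (𝓝 0) :=
  cauchy_completion_forward_complete_general G q dQ hsurj hdQ
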